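/- If f ∈ H¹(μ) satisfies (-L_ham + γ L_FD) f = 0 in the weak sense, where L_ham is antisymmetric on L²(μ) and L_FD = -β⁻¹ Σᵢ ∂_{p_i}*∂_{p_i}, then ∇_p f = 0 μ-almost everywhere; moreover, if additionally f is smooth, then f satisfies pᵀM⁻¹∇_q f(q) = 0 for all p, hence ∇_q f = 0, so f is constant. Thus f = 1 is the unique (up to normalization) stationary density in L²(μ) for the Langevin dynamics. -/

import Mathlib

open MeasureTheory Matrix Real


lemma quad_lower_bound {d : ℕ} {A : Matrix (Fin d) (Fin d) ℝ} (hA : A.PosDef) :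
    ∃ c > (0:ℝ), ∀ p : Fin d → ℝ, c * ∑ i, p i ^ 2 ≤ p ⬝ᵥ (A *ᵥ p) := by
  rcases Nat.eq_zero_or_pos d with hd | hd
  · subst hd
    exact ⟨1, one_pos, fun p => by simp [dotProduct]⟩
  set Q : (Fin d → ℝ) → ℝ := fun p => p ⬝ᵥ (A *ᵥ p) with hQ
  have hQcont : Continuous Q := by
    apply continuous_id.dotProduct
    exact (continuous_const (y := A)).matrix_mulVec continuous_id
  set S : Set (Fin d → ℝ) := {p | ∑ i, p i ^ 2 = 1} with hS
  have hScl : IsClosed S := isClosed_eq (by continuity) continuous_const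
  have hScomp : IsCompact S := by
    refine (isCompact_closedBall (0 : Fin d → ℝ) 1).of_isClosed_subset hScl ?_
    intro p hp
    rw [Metric.mem_closedBall, dist_zero_right]
    refine (pi_norm_le_iff_of_nonneg zero_le_one).2 fun i => ?_
    have h1 : p i ^ 2 ≤ 1 := by
      rw [← hp]
      exact Finset.single_le_sum (fun j _ => sq_nonneg (p j)) (Finset.mem_univ i)
    rw [Real.norm_eq_abs]
    nlinarith [abs_nonneg (p i), sq_abs (p i)]
  have hSne : S.Nonempty := by
    refine ⟨Pi.single (⟨0, hd⟩ : Fin d) 1, ?_⟩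
    simp [hS, Pi.single_apply, Finset.sum_ite_eq']
  obtain ⟨p0, hp0S, hp0min⟩ := hScomp.exists_isMinOn hSne hQcont.continuousOn
  have hp0ne : p0 ≠ 0 := by
    intro h
    rw [h] at hp0S
    simp [hS] at hp0S
  have hc : 0 < Q p0 := by simpa [hQ] using hA.dotProduct_mulVec_pos hp0ne
  refine ⟨Q p0, hc, fun p => ?_⟩
  rcases eq_or_ne p 0 with rfl | hp
  · simp
  have hsum : 0 < ∑ i, p i ^ 2 := by
    have : ∃ i, p i ≠ 0 := by
      by_contra h
      push_neg at h
      exact hp (funext h)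
    obtain ⟨i, hi⟩ := this
    exact Finset.sum_pos' (fun j _ => sq_nonneg _) ⟨i, Finset.mem_univ i, by positivity⟩
  set t : ℝ := Real.sqrt (∑ i, p i ^ 2) with ht
  have htpos : 0 < t := Real.sqrt_pos.2 hsum
  have ht2 : t ^ 2 = ∑ i, p i ^ 2 := Real.sq_sqrt hsum.le
  have hmem : t⁻¹ • p ∈ S := by
    simp only [hS, Set.mem_setOf_eq, Pi.smul_apply, smul_eq_mul, mul_pow, ← Finset.mul_sum]
    rw [← ht2]
    field_simp
  have hQsmul : Q (t⁻¹ • p) = t⁻¹ * (t⁻¹ * Q p) := by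
    simp [hQ, smul_dotProduct, mulVec_smul, dotProduct_smul, smul_eq_mul, mul_assoc]
  have hle : Q p0 ≤ t⁻¹ * (t⁻¹ * Q p) := hQsmul ▸ hp0min hmem
  have hmul := mul_le_mul_of_nonneg_left hle (by positivity : (0:ℝ) ≤ t * t)
  calc Q p0 * ∑ i, p i ^ 2 = (t * t) * Q p0 := by rw [← ht2]; ring
    _ ≤ (t*t) * (t⁻¹ * (t⁻¹ * Q p)) := hmul
    _ = Q p := by field_simp

lemma integrable_exp_neg_mul_sum_sq {d : ℕ} {b : ℝ} (hb : 0 < b) :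
    Integrable (fun p : Fin d → ℝ => Real.exp (-b * ∑ i, p i ^ 2)) := by
  have h := (GaussianFourier.integrable_cexp_neg_mul_sum_add (ι := Fin d) (b := (b:ℂ))
    (by simpa using hb) (fun _ => 0)).norm
  refine h.congr (Filter.Eventually.of_forall fun p => ?_)
  show ‖Complex.exp _‖ = _
  rw [Complex.norm_exp]
  congr 1
  have : -(b:ℂ) * ∑ i, (p i : ℂ) ^ 2 + ∑ i, (0:ℂ) * (p i) = ((-b * ∑ i, p i ^2 : ℝ) : ℂ) := by
    push_cast
    simp
  rw [this, Complex.ofReal_re]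

lemma pair_snd_eq_sum {d : ℕ} (v : Fin d → ℝ) :
    ((0 : Fin d → ℝ), v) = ∑ i, v i • (((0 : Fin d → ℝ), Pi.single i (1:ℝ)) : (Fin d → ℝ) × (Fin d → ℝ)) := by
  refine Prod.ext ?_ ?_
  · simp [Prod.fst_sum]
  · rw [Prod.snd_sum]
    funext j
    simp only [Prod.smul_mk, Finset.sum_apply, Pi.smul_apply, Pi.single_apply, smul_eq_mul,
      mul_ite, mul_one, mul_zero]
    simp [Finset.sum_ite_eq]

lemma pair_fst_eq_sum {d : ℕ} (v : Fin d → ℝ) :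
    (v, (0 : Fin d → ℝ)) = ∑ i, v i • ((Pi.single i (1:ℝ), (0 : Fin d → ℝ)) : (Fin d → ℝ) × (Fin d → ℝ)) := by
  refine Prod.ext ?_ ?_
  · rw [Prod.fst_sum]
    funext j
    simp only [Prod.smul_mk, Finset.sum_apply, Pi.smul_apply, Pi.single_apply, smul_eq_mul,
      mul_ite, mul_one, mul_zero]
    simp [Finset.sum_ite_eq]
  · simp [Prod.snd_sum]


/-- If `f` (smooth, with square-integrable momentum gradient) satisfies the
stationary Fokker–Planck equation `(-L_ham + γ L_FD) f = 0` in the weak sense — here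
encoded by the pointwise equation together with the integration-by-parts identities
`∫ (L_ham f) f dμ = 0` and `∫ (L_FD f) f dμ = -β⁻¹ ∫ |∇_p f|² dμ` valid from the weak
formulation — then `∇_p f = 0` everywhere; moreover `pᵀM⁻¹∇_q f = 0` for all `p`,
hence `∇_q f = 0`, so `f` is constant. Thus `f = 1` is the unique (up to normalization)
stationary density in `L²(μ)` for the Langevin dynamics. -/
theorem stmt_6 (d : ℕ) (β γ : ℝ) (hβ : 0 < β) (hγ : 0 < γ)
    (V : (Fin d → ℝ) → ℝ) (hV : ContDiff ℝ (⊤ : ℕ∞) V)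
    (M : Matrix (Fin d) (Fin d) ℝ) (hM : M.PosDef) (hMsymm : M.IsSymm)
    (hVint : Integrable (fun q => Real.exp (-β * V q)) (volume : Measure (Fin d → ℝ)))
    (Z : ℝ) (hZ : Z = ∫ x : (Fin d → ℝ) × (Fin d → ℝ),
      Real.exp (-β * (V x.1 + (1:ℝ)/2 * (x.2 ⬝ᵥ (M⁻¹ *ᵥ x.2)))))
    (μ : Measure ((Fin d → ℝ) × (Fin d → ℝ)))
    (hμ : μ = (volume : Measure ((Fin d → ℝ) × (Fin d → ℝ))).withDensity
      (fun x => ENNReal.ofReal (Z⁻¹ *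
        Real.exp (-β * (V x.1 + (1:ℝ)/2 * (x.2 ⬝ᵥ (M⁻¹ *ᵥ x.2)))))))
    (f : ((Fin d → ℝ) × (Fin d → ℝ)) → ℝ) (hf : ContDiff ℝ (⊤ : ℕ∞) f)
    (hfL2 : MemLp f 2 μ)
    -- L_ham f and L_FD f
    (Lhamf LFDf : ((Fin d → ℝ) × (Fin d → ℝ)) → ℝ)
    (hLham : ∀ x, Lhamf x
      = x.2 ⬝ᵥ (M⁻¹ *ᵥ fun i => fderiv ℝ f x (Pi.single i (1:ℝ), 0))
        - (fun i => fderiv ℝ V x.1 (Pi.single i (1:ℝ)))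
            ⬝ᵥ (fun i => fderiv ℝ f x ((0 : Fin d → ℝ), Pi.single i (1:ℝ))))
    (hLFD : ∀ x, LFDf x
      = -(x.2 ⬝ᵥ (M⁻¹ *ᵥ fun i => fderiv ℝ f x ((0 : Fin d → ℝ), Pi.single i (1:ℝ))))
        + β⁻¹ * ∑ i, fderiv ℝ (fun y => fderiv ℝ f y ((0 : Fin d → ℝ), Pi.single i (1:ℝ)))
            x ((0 : Fin d → ℝ), Pi.single i (1:ℝ)))
    -- the stationary equation L* f = (-L_ham + γ L_FD) f = 0
    (heq : ∀ x, -(Lhamf x) + γ * LFDf x = 0)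
    -- integration-by-parts identities from the weak formulation (antisymmetry of L_ham
    -- and L_FD = -β⁻¹ Σᵢ ∂_{p_i}*∂_{p_i})
    (hibp_ham : ∫ x, Lhamf x * f x ∂μ = 0)
    (hibp_FD : ∫ x, LFDf x * f x ∂μ
      = -β⁻¹ * ∫ x, ∑ i, (fderiv ℝ f x ((0 : Fin d → ℝ), Pi.single i (1:ℝ)))^2 ∂μ)
    (hint1 : Integrable (fun x => Lhamf x * f x) μ)
    (hint2 : Integrable
      (fun x => ∑ i, (fderiv ℝ f x ((0 : Fin d → ℝ), Pi.single i (1:ℝ)))^2) μ) :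
    (∀ x i, fderiv ℝ f x ((0 : Fin d → ℝ), Pi.single i (1:ℝ)) = 0) ∧
    (∀ x : (Fin d → ℝ) × (Fin d → ℝ),
      x.2 ⬝ᵥ (M⁻¹ *ᵥ fun i => fderiv ℝ f x (Pi.single i (1:ℝ), 0)) = 0) ∧
    (∀ x i, fderiv ℝ f x (Pi.single i (1:ℝ), 0) = 0) ∧
    (∃ c : ℝ, ∀ x, f x = c) := by
  classical
  obtain ⟨c, hc, hcle⟩ := quad_lower_bound hM.inv
  -- continuity of the quadratic form
  have hQc : Continuous fun p : Fin d → ℝ => p ⬝ᵥ (M⁻¹ *ᵥ p) := by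
    apply continuous_id.dotProduct
    exact (continuous_const (y := M⁻¹)).matrix_mulVec continuous_id
  -- Gaussian integrability
  have hGauss : Integrable
      (fun p : Fin d → ℝ => Real.exp (-β * ((1:ℝ)/2 * (p ⬝ᵥ (M⁻¹ *ᵥ p))))) volume := by
    have hmaj := integrable_exp_neg_mul_sum_sq (d := d) (b := β * c / 2) (by positivity)
    refine hmaj.mono ?_ (Filter.Eventually.of_forall fun p => ?_)
    · exact (Real.continuous_exp.comp (continuous_const.mul (continuous_const.mul hQc))).aestronglyMeasurable
    · rw [Real.norm_eq_abs, abs_of_pos (Real.exp_pos _), Real.norm_eq_abs,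
        abs_of_pos (Real.exp_pos _)]
      apply Real.exp_le_exp.2
      nlinarith [hcle p]
  -- integrability of the unnormalized density
  have h_density_int : Integrable
      (fun x : (Fin d → ℝ) × (Fin d → ℝ) =>
        Real.exp (-β * (V x.1 + (1:ℝ)/2 * (x.2 ⬝ᵥ (M⁻¹ *ᵥ x.2))))) volume := by
    rw [Measure.volume_eq_prod]
    refine (hVint.mul_prod hGauss).congr (Filter.Eventually.of_forall fun x => ?_)
    show Real.exp _ * Real.exp _ = _
    rw [← Real.exp_add]
    congr 1
    ring
  have hZpos : 0 < Z := by
    rw [hZ, integral_pos_iff_support_of_nonneg (fun x => (Real.exp_pos _).le) h_density_int]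
    have hsupp : Function.support (fun x : (Fin d → ℝ) × (Fin d → ℝ) =>
        Real.exp (-β * (V x.1 + (1:ℝ)/2 * (x.2 ⬝ᵥ (M⁻¹ *ᵥ x.2))))) = Set.univ :=
      Set.eq_univ_of_forall fun x => (Real.exp_pos _).ne'
    rw [hsupp]
    exact isOpen_univ.measure_pos volume ⟨(0, 0), trivial⟩
  have hρpos : ∀ x : (Fin d → ℝ) × (Fin d → ℝ),
      0 < Z⁻¹ * Real.exp (-β * (V x.1 + (1:ℝ)/2 * (x.2 ⬝ᵥ (M⁻¹ *ᵥ x.2)))) :=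
    fun x => mul_pos (inv_pos.2 hZpos) (Real.exp_pos _)
  -- the integral of |∇_p f|² vanishes
  have hFD0 : ∫ x, LFDf x * f x ∂μ = 0 := by
    have hfun : (fun x => LFDf x * f x) = fun x => γ⁻¹ * (Lhamf x * f x) := by
      funext x
      have h := heq x
      have : Lhamf x = γ * LFDf x := by linarith
      rw [this]
      field_simp
    rw [hfun, integral_const_mul, hibp_ham, mul_zero]
  have hI : ∫ x, (∑ i, (fderiv ℝ f x ((0 : Fin d → ℝ), Pi.single i (1:ℝ)))^2) ∂μ = 0 := by
    have h := hibp_FD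
    rw [hFD0] at h
    have hβ' : -β⁻¹ ≠ 0 := by
      have : (0:ℝ) < β⁻¹ := by positivity
      linarith
    rcases mul_eq_zero.1 h.symm with h' | h'
    · exact absurd h' hβ'
    · exact h'
  set g : ((Fin d → ℝ) × (Fin d → ℝ)) → ℝ :=
    fun x => ∑ i, (fderiv ℝ f x ((0 : Fin d → ℝ), Pi.single i (1:ℝ)))^2 with hg
  have hgae : g =ᵐ[μ] 0 :=
    (integral_eq_zero_iff_of_nonneg (fun x => Finset.sum_nonneg fun i _ => sq_nonneg _) hint2).1 hI
  have hdfc : Continuous (fderiv ℝ f) := hf.continuous_fderiv (by simp)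
  have hgcont : Continuous g := by
    apply continuous_finset_sum
    exact fun i _ => (hdfc.clm_apply continuous_const).pow 2
  have hAmeas : MeasurableSet {x : (Fin d → ℝ) × (Fin d → ℝ) | g x ≠ 0} :=
    hgcont.measurable (MeasurableSet.compl (measurableSet_singleton (0:ℝ)))
  have hA : μ {x | g x ≠ 0} = 0 := by
    have h := hgae
    rw [Filter.EventuallyEq, ae_iff] at h
    simpa using h
  have hAvol : (volume : Measure ((Fin d → ℝ) × (Fin d → ℝ))) {x | g x ≠ 0} = 0 := by
    rw [hμ, withDensity_apply _ hAmeas] at hA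
    have hmeasρ : Measurable fun x : (Fin d → ℝ) × (Fin d → ℝ) =>
        ENNReal.ofReal (Z⁻¹ * Real.exp (-β * (V x.1 + (1:ℝ)/2 * (x.2 ⬝ᵥ (M⁻¹ *ᵥ x.2))))) := by
      apply Measurable.ennreal_ofReal
      apply Continuous.measurable
      exact continuous_const.mul (Real.continuous_exp.comp
        (continuous_const.mul ((hV.continuous.comp continuous_fst).add
          (continuous_const.mul (hQc.comp continuous_snd)))))
    rw [setLIntegral_eq_zero_iff hAmeas hmeasρ] at hA
    have h2 := hA
    have h3 : ∀ᵐ x : (Fin d → ℝ) × (Fin d → ℝ), x ∉ {x | g x ≠ 0} := by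
      refine h2.mono fun x hx hxA => ?_
      have h4 := hx hxA
      have h5 : 0 < ENNReal.ofReal
          (Z⁻¹ * Real.exp (-β * (V x.1 + (1:ℝ)/2 * (x.2 ⬝ᵥ (M⁻¹ *ᵥ x.2))))) :=
        ENNReal.ofReal_pos.2 (hρpos x)
      rw [h4] at h5
      exact absurd h5 (lt_irrefl _)
    rw [ae_iff] at h3
    simpa using h3
  have hg0 : ∀ x, g x = 0 := by
    have hae : g =ᵐ[(volume : Measure ((Fin d → ℝ) × (Fin d → ℝ)))] (fun _ => 0) := by
      rw [Filter.EventuallyEq, ae_iff]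
      simpa using hAvol
    have := (hgcont.ae_eq_iff_eq (volume) continuous_const).1 hae
    exact fun x => congrFun this x
  have hp : ∀ x i, fderiv ℝ f x ((0 : Fin d → ℝ), Pi.single i (1:ℝ)) = 0 := by
    intro x i
    have hsum := hg0 x
    have h := (Finset.sum_eq_zero_iff_of_nonneg fun j _ => sq_nonneg _).1 hsum i (Finset.mem_univ i)
    exact (pow_eq_zero_iff two_ne_zero).1 h
  -- L_FD f = 0 everywhere
  have hLFD0 : ∀ x, LFDf x = 0 := by
    intro x
    rw [hLFD x]
    have h1 : (fun i => fderiv ℝ f x ((0 : Fin d → ℝ), Pi.single i (1:ℝ))) = (0 : Fin d → ℝ) :=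
      funext fun i => hp x i
    have h2 : ∀ i, (fun y => fderiv ℝ f y ((0 : Fin d → ℝ), Pi.single i (1:ℝ)))
        = (fun _ => (0:ℝ)) := fun i => funext fun y => hp y i
    rw [h1, mulVec_zero, dotProduct_zero, neg_zero, zero_add]
    have h3 : ∀ i : Fin d, fderiv ℝ (fun y => fderiv ℝ f y ((0 : Fin d → ℝ), Pi.single i (1:ℝ)))
        x ((0 : Fin d → ℝ), Pi.single i (1:ℝ)) = 0 := by
      intro i
      rw [h2 i]
      simp
    rw [Finset.sum_congr rfl fun i _ => h3 i]
    simp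
  have hLham0 : ∀ x, Lhamf x = 0 := by
    intro x
    have h := heq x
    rw [hLFD0 x] at h
    linarith
  have hpart2 : ∀ x : (Fin d → ℝ) × (Fin d → ℝ),
      x.2 ⬝ᵥ (M⁻¹ *ᵥ fun i => fderiv ℝ f x (Pi.single i (1:ℝ), 0)) = 0 := by
    intro x
    have h := hLham0 x
    rw [hLham x] at h
    have h1 : (fun i => fderiv ℝ f x ((0 : Fin d → ℝ), Pi.single i (1:ℝ))) = (0 : Fin d → ℝ) :=
      funext fun i => hp x i
    rw [h1, dotProduct_zero, sub_zero] at h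
    exact h
  have hdiff := hf.differentiable (by simp)
  -- f is independent of p
  have hconstp : ∀ q p p' : Fin d → ℝ, f (q, p) = f (q, p') := by
    intro q p p'
    have hder : ∀ p0 : Fin d → ℝ, fderiv ℝ (fun y : Fin d → ℝ => f (q, y)) p0 = 0 := by
      intro p0
      have hcomp : HasFDerivAt (fun y : Fin d → ℝ => f (q, y))
          ((fderiv ℝ f (q, p0)).comp (ContinuousLinearMap.inr ℝ (Fin d → ℝ) (Fin d → ℝ))) p0 :=
        (hdiff (q, p0)).hasFDerivAt.comp p0 (hasFDerivAt_prodMk_right q p0)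
      have hzero : (fderiv ℝ f (q, p0)).comp
          (ContinuousLinearMap.inr ℝ (Fin d → ℝ) (Fin d → ℝ)) = 0 := by
        refine ContinuousLinearMap.ext fun v => ?_
        show fderiv ℝ f (q, p0) ((0 : Fin d → ℝ), v) = 0
        rw [pair_snd_eq_sum v, map_sum]
        refine Finset.sum_eq_zero fun i _ => ?_
        rw [ContinuousLinearMap.map_smul, hp (q, p0) i, smul_zero]
      rw [hcomp.fderiv, hzero]
    exact is_const_of_fderiv_eq_zero
      (fun p0 => ((hdiff (q, p0)).hasFDerivAt.comp p0
        (hasFDerivAt_prodMk_right q p0)).differentiableAt) hder p p'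
  -- q-derivatives do not depend on p
  have hqder : ∀ (q p : Fin d → ℝ) (i : Fin d), fderiv ℝ f (q, p) (Pi.single i (1:ℝ), 0)
      = fderiv ℝ (fun y : Fin d → ℝ => f (y, p)) q (Pi.single i (1:ℝ)) := by
    intro q p i
    have hcomp : HasFDerivAt (fun y : Fin d → ℝ => f (y, p))
        ((fderiv ℝ f (q, p)).comp (ContinuousLinearMap.inl ℝ (Fin d → ℝ) (Fin d → ℝ))) q :=
      (hdiff (q, p)).hasFDerivAt.comp q (hasFDerivAt_prodMk_left q p)
    rw [hcomp.fderiv]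
    rfl
  have hq_indep : ∀ (q p p' : Fin d → ℝ) (i : Fin d),
      fderiv ℝ f (q, p) (Pi.single i (1:ℝ), 0) = fderiv ℝ f (q, p') (Pi.single i (1:ℝ), 0) := by
    intro q p p' i
    rw [hqder q p i, hqder q p' i]
    have : (fun y : Fin d → ℝ => f (y, p)) = fun y => f (y, p') :=
      funext fun y => hconstp y p p'
    rw [this]
  have hpart3 : ∀ (x : (Fin d → ℝ) × (Fin d → ℝ)) (i : Fin d),
      fderiv ℝ f x (Pi.single i (1:ℝ), 0) = 0 := by
    rintro ⟨q, p⟩ i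
    set w : Fin d → ℝ := fun j => fderiv ℝ f (q, p) (Pi.single j (1:ℝ), 0) with hw
    have hMw : M⁻¹ *ᵥ w = 0 := by
      funext j
      have h2 := hpart2 (q, Pi.single j (1:ℝ))
      have hveq : (fun i => fderiv ℝ f (q, Pi.single j (1:ℝ)) (Pi.single i (1:ℝ), 0)) = w :=
        funext fun i => hq_indep q (Pi.single j (1:ℝ)) p i
      rw [show ((q, Pi.single j (1:ℝ)) : (Fin d → ℝ) × (Fin d → ℝ)).2 = Pi.single j (1:ℝ) from rfl,
        hveq, single_dotProduct] at h2
      simpa using h2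
    have hw0 : w = 0 := by
      have h := congrArg (fun u => M *ᵥ u) hMw
      simpa [mulVec_mulVec, Matrix.mul_nonsing_inv M (isUnit_iff_ne_zero.2 hM.det_pos.ne'),
        one_mulVec, mulVec_zero] using h
    exact congrFun hw0 i
  have hfder0 : ∀ x : (Fin d → ℝ) × (Fin d → ℝ), fderiv ℝ f x = 0 := by
    intro x
    refine ContinuousLinearMap.ext fun v => ?_
    obtain ⟨a, b⟩ := v
    have hsplit : ((a, b) : (Fin d → ℝ) × (Fin d → ℝ))
        = (a, (0 : Fin d → ℝ)) + ((0 : Fin d → ℝ), b) := by simp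
    have h1 : fderiv ℝ f x (a, (0 : Fin d → ℝ)) = 0 := by
      rw [pair_fst_eq_sum a, map_sum]
      exact Finset.sum_eq_zero fun i _ => by
        rw [ContinuousLinearMap.map_smul, hpart3 x i, smul_zero]
    have h2 : fderiv ℝ f x ((0 : Fin d → ℝ), b) = 0 := by
      rw [pair_snd_eq_sum b, map_sum]
      exact Finset.sum_eq_zero fun i _ => by
        rw [ContinuousLinearMap.map_smul, hp x i, smul_zero]
    rw [ContinuousLinearMap.zero_apply, hsplit, map_add, h1, h2, add_zero]
  exact ⟨hp, hpart2, hpart3, ⟨f 0, fun x => is_const_of_fderiv_eq_zero hdiff hfder0 x 0⟩⟩
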